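/- arXiv:2207.08421 — 3 statements merged into one kernel-verified Lean document; each statement's English description precedes it below -/
import Mathlib

section
/- Let H be a real Hilbert space, and let Q : H → H be a bounded linear operator that is self-adjoint (⟨Qx, y⟩ = ⟨x, Qy⟩ for all x, y) and positive semidefinite (⟨Qx, x⟩ ≥ 0 for all x). Let T > 0 and let e, ρ : [0,T] → H be continuous functions such that e is continuously differentiable on [0,T], e(T) = 0, and −Q(e′(t)) + e(t) = ρ(t) for all t ∈ [0,T]. Then ⟨Q e(0), e(0)⟩ + ∫₀ᵀ ‖e(t)‖² dt ≤ ∫₀ᵀ ‖ρ(t)‖² dt. -/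
open MeasureTheory
open scoped RealInnerProductSpace

/-- Let `H` be a real Hilbert space and `Q : H → H` a bounded linear
operator that is self-adjoint and positive semidefinite.  Let `T > 0` and let
`e, ρ : [0,T] → H` be continuous, with `e` continuously differentiable on `[0,T]`,
`e T = 0` and `-Q (e' t) + e t = ρ t` on `[0,T]`.  Then
`⟪Q (e 0), e 0⟫ + ∫₀ᵀ ‖e t‖² dt ≤ ∫₀ᵀ ‖ρ t‖² dt`. -/
theorem abstract_backward_energy_estimate
    {H : Type*} [NormedAddCommGroup H] [InnerProductSpace ℝ H] [CompleteSpace H]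
    (Q : H →L[ℝ] H)
    (hQ_sa : ∀ x y : H, ⟪Q x, y⟫ = ⟪x, Q y⟫)
    (hQ_pos : ∀ x : H, 0 ≤ ⟪Q x, x⟫)
    (T : ℝ) (hT : 0 < T)
    (e e' ρ : ℝ → H)
    (he : ∀ t ∈ Set.Icc (0 : ℝ) T, HasDerivWithinAt e (e' t) (Set.Icc (0 : ℝ) T) t)
    (he' : ContinuousOn e' (Set.Icc (0 : ℝ) T))
    (hρ : ContinuousOn ρ (Set.Icc (0 : ℝ) T))
    (heT : e T = 0)
    (heq : ∀ t ∈ Set.Icc (0 : ℝ) T, -Q (e' t) + e t = ρ t) :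
    ⟪Q (e 0), e 0⟫ + ∫ t in (0 : ℝ)..T, ‖e t‖ ^ 2 ≤ ∫ t in (0 : ℝ)..T, ‖ρ t‖ ^ 2 := by
  have hT' : (0:ℝ) ≤ T := hT.le
  have huIcc : Set.uIcc (0:ℝ) T = Set.Icc 0 T := Set.uIcc_of_le hT'
  set F : ℝ → ℝ := fun t => ⟪Q (e t), e t⟫ with hF
  set g : ℝ → ℝ := fun t => 2 * ⟪Q (e' t), e t⟫ with hg
  have he_cont : ContinuousOn e (Set.Icc 0 T) := fun t ht => (he t ht).continuousWithinAt
  -- continuity of F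
  have hFcont : ContinuousOn F (Set.Icc 0 T) :=
    ((Q.continuous.comp_continuousOn he_cont).inner he_cont)
  have hgcont : ContinuousOn g (Set.Icc 0 T) :=
    continuousOn_const.mul ((Q.continuous.comp_continuousOn he').inner he_cont)
  -- derivative of F on interior
  have hFderiv : ∀ t ∈ Set.Ioo (0:ℝ) T, HasDerivWithinAt F (g t) (Set.Ioi t) t := by
    intro t ht
    have htI : t ∈ Set.Icc (0:ℝ) T := Set.Ioo_subset_Icc_self ht
    have hnhds : Set.Icc (0:ℝ) T ∈ nhds t := Icc_mem_nhds ht.1 ht.2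
    have hde : HasDerivAt e (e' t) t := (he t htI).hasDerivAt hnhds
    have hQe : HasDerivAt (fun t => Q (e t)) (Q (e' t)) t := Q.hasFDerivAt.comp_hasDerivAt t hde
    have : HasDerivAt F (⟪Q (e t), e' t⟫ + ⟪Q (e' t), e t⟫) t := hQe.inner ℝ hde
    have h2 : ⟪Q (e t), e' t⟫ + ⟪Q (e' t), e t⟫ = g t := by
      rw [hQ_sa, real_inner_comm]; ring
    exact (h2 ▸ this).hasDerivWithinAt
  have hgint : IntervalIntegrable g volume 0 T :=
    (hgcont.mono (by rw [huIcc])).intervalIntegrable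
  have hFTC : ∫ t in (0:ℝ)..T, g t = F T - F 0 :=
    intervalIntegral.integral_eq_sub_of_hasDeriv_right_of_le hT' hFcont hFderiv hgint
  have hFT : F T = 0 := by simp [hF, heT]
  -- pointwise inequality
  have hpt : ∀ t ∈ Set.Icc (0:ℝ) T, ‖e t‖ ^ 2 - g t ≤ ‖ρ t‖ ^ 2 := by
    intro t ht
    have hρt : ρ t = e t - Q (e' t) := by rw [← heq t ht]; abel
    have : ‖ρ t‖ ^ 2 = ‖e t‖ ^ 2 - 2 * ⟪e t, Q (e' t)⟫ + ‖Q (e' t)‖ ^ 2 := by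
      rw [hρt, @norm_sub_sq_real]
    rw [this, real_inner_comm]
    simp only [hg]
    nlinarith [sq_nonneg (‖Q (e' t)‖)]
  have he2int : IntervalIntegrable (fun t => ‖e t‖ ^ 2) volume 0 T :=
    ((he_cont.norm.pow 2).mono (by rw [huIcc])).intervalIntegrable
  have hρ2int : IntervalIntegrable (fun t => ‖ρ t‖ ^ 2) volume 0 T :=
    ((hρ.norm.pow 2).mono (by rw [huIcc])).intervalIntegrable
  have hmono : ∫ t in (0:ℝ)..T, (‖e t‖ ^ 2 - g t) ≤ ∫ t in (0:ℝ)..T, ‖ρ t‖ ^ 2 :=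
    intervalIntegral.integral_mono_on hT' (he2int.sub hgint) hρ2int hpt
  rw [intervalIntegral.integral_sub he2int hgint, hFTC, hFT] at hmono
  have : F 0 = ⟪Q (e 0), e 0⟫ := rfl
  linarith
end

section
/- Let V be a real Hilbert space, W ⊆ V a closed subspace with orthogonal projection P : V → W, and a : V × V → ℝ a bounded symmetric bilinear form with a(v,v) ≥ 0 for all v ∈ V. Let T > 0, let ψ : [0,T] → V and ψ_h : [0,T] → W be continuously differentiable with ψ(T) = 0 and ψ_h(T) = 0, and let R : [0,T] → W be continuous such that for every t ∈ [0,T]: (i) a(R(t) − ψ(t), w) = 0 for all w ∈ W, and (ii) ⟨ψ′(t) − ψ_h′(t), w⟩ = a(R(t) − ψ_h(t), w) for all w ∈ W. Then ‖ψ(0) − ψ_h(0)‖² + ∫₀ᵀ a(R(t) − ψ_h(t), R(t) − ψ_h(t)) dt ≤ ‖ψ(0) − P(ψ(0))‖² + ∫₀ᵀ a(R(t) − P(ψ(t)), R(t) − P(ψ(t))) dt. -/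
open MeasureTheory
open scoped RealInnerProductSpace

/-- Quasi-optimal energy estimate for the semi-discrete approximation of
the backward problem.  `V` is a real Hilbert space, `W` a closed subspace with orthogonal
projection `P`, `a` a bounded symmetric positive-semidefinite bilinear form, `ψ, ψ_h`
continuously differentiable on `[0,T]` with values in `V` resp. `W`, vanishing at `T`,
`R : [0,T] → W` continuous with (i) `a (R t - ψ t, w) = 0` for all `w ∈ W` (elliptic
projection) and (ii) `⟪ψ' t - ψ_h' t, w⟫ = a (R t - ψ_h t, w)` for all `w ∈ W`
(Galerkin orthogonality).  Then
`‖ψ 0 - ψ_h 0‖² + ∫₀ᵀ a (R - ψ_h, R - ψ_h) ≤ ‖ψ 0 - P (ψ 0)‖² + ∫₀ᵀ a (R - P ψ, R - P ψ)`. -/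
theorem semidiscrete_backward_quasi_optimal_energy
    {V : Type*} [NormedAddCommGroup V] [InnerProductSpace ℝ V] [CompleteSpace V]
    (W : Submodule ℝ V) [CompleteSpace W]
    (a : V →ₗ[ℝ] V →ₗ[ℝ] ℝ)
    (M : ℝ) (ha_bdd : ∀ u v : V, |a u v| ≤ M * ‖u‖ * ‖v‖)
    (ha_symm : ∀ u v : V, a u v = a v u)
    (ha_pos : ∀ v : V, 0 ≤ a v v)
    (T : ℝ) (hT : 0 < T)
    (ψ ψ' ψh ψh' R : ℝ → V)
    (hψ : ∀ t ∈ Set.Icc (0 : ℝ) T, HasDerivWithinAt ψ (ψ' t) (Set.Icc (0 : ℝ) T) t)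
    (hψ' : ContinuousOn ψ' (Set.Icc (0 : ℝ) T))
    (hψh : ∀ t ∈ Set.Icc (0 : ℝ) T, HasDerivWithinAt ψh (ψh' t) (Set.Icc (0 : ℝ) T) t)
    (hψh' : ContinuousOn ψh' (Set.Icc (0 : ℝ) T))
    (hψhW : ∀ t ∈ Set.Icc (0 : ℝ) T, ψh t ∈ W)
    (hψT : ψ T = 0) (hψhT : ψh T = 0)
    (hR : ContinuousOn R (Set.Icc (0 : ℝ) T))
    (hRW : ∀ t ∈ Set.Icc (0 : ℝ) T, R t ∈ W)
    (hi : ∀ t ∈ Set.Icc (0 : ℝ) T, ∀ w ∈ W, a (R t - ψ t) w = 0)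
    (hii : ∀ t ∈ Set.Icc (0 : ℝ) T, ∀ w ∈ W,
      ⟪ψ' t - ψh' t, w⟫ = a (R t - ψh t) w) :
    ‖ψ 0 - ψh 0‖ ^ 2 + ∫ t in (0 : ℝ)..T, a (R t - ψh t) (R t - ψh t) ≤
      ‖ψ 0 - (W.orthogonalProjectionOnto (ψ 0) : V)‖ ^ 2 +
        ∫ t in (0 : ℝ)..T,
          a (R t - (W.orthogonalProjectionOnto (ψ t) : V))
            (R t - (W.orthogonalProjectionOnto (ψ t) : V)) := by
  have hT0 : (0:ℝ) ≤ T := hT.le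
  set I := Set.Icc (0:ℝ) T with hIdef
  have h0I : (0:ℝ) ∈ I := ⟨le_refl _, hT0⟩
  have hTI : T ∈ I := ⟨hT0, le_refl _⟩
  -- the bilinear form as a continuous bilinear map
  let B : V →L[ℝ] V →L[ℝ] ℝ := LinearMap.mkContinuous₂ a M (fun u v => by
    simpa [Real.norm_eq_abs] using ha_bdd u v)
  have hB : ∀ u v : V, B u v = a u v := fun u v => rfl
  -- the projection as a continuous linear map `V →L[ℝ] V`
  let P : V →L[ℝ] V := W.subtypeL.comp (W.orthogonalProjectionOnto)
  have hPv : ∀ v : V, (W.orthogonalProjectionOnto v : V) = P v := fun v => rfl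
  have hPmem : ∀ v : V, P v ∈ W := fun v => (W.orthogonalProjectionOnto v).2
  have hPid : ∀ v ∈ W, P v = v := fun v hv => Submodule.starProjection_eq_self_iff.mpr hv
  have hPerp : ∀ v : V, ∀ w ∈ W, ⟪v - P v, w⟫ = 0 := by
    intro v w hw
    have h1 : v - P v ∈ Wᗮ := Submodule.sub_starProjection_mem_orthogonal (K := W) v
    exact (Submodule.mem_orthogonal' W _).1 h1 w hw
  -- abbreviations
  set θ : ℝ → V := fun t => R t - ψh t with hθdef
  set ξ : ℝ → V := fun t => R t - P (ψ t) with hξdef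
  -- continuity facts
  have hψc : ContinuousOn ψ I := fun t ht => (hψ t ht).continuousWithinAt
  have hψhc : ContinuousOn ψh I := fun t ht => (hψh t ht).continuousWithinAt
  have hθc : ContinuousOn θ I := hR.sub hψhc
  have hξc : ContinuousOn ξ I := hR.sub (P.continuous.comp_continuousOn hψc)
  have haCont : ∀ {f g : ℝ → V}, ContinuousOn f I → ContinuousOn g I →
      ContinuousOn (fun t => a (f t) (g t)) I := by
    intro f g hf hg
    have : ContinuousOn (fun t => B (f t) (g t)) I :=
      B.continuous₂.comp_continuousOn (hf.prodMk hg)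
    simpa [hB] using this
  have hint : ∀ {f : ℝ → ℝ}, ContinuousOn f I → IntervalIntegrable f volume 0 T := by
    intro f hf
    apply ContinuousOn.intervalIntegrable
    rwa [Set.uIcc_of_le hT0]
  -- membership facts
  have hθW : ∀ t ∈ I, θ t ∈ W := fun t ht => W.sub_mem (hRW t ht) (hψhW t ht)
  -- `ψh'` takes values in `W`
  have hψh'W : ∀ t ∈ I, ψh' t ∈ W := by
    intro t ht
    have h1 : HasDerivWithinAt (fun s => P (ψh s)) (P (ψh' t)) I t :=
      P.hasFDerivAt.comp_hasDerivWithinAt t (hψh t ht)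
    have h2 : HasDerivWithinAt ψh (P (ψh' t)) I t :=
      h1.congr (fun s hs => (hPid _ (hψhW s hs)).symm) (hPid _ (hψhW t ht)).symm
    have hu : UniqueDiffWithinAt ℝ I t := uniqueDiffOn_Icc hT t ht
    have he : P (ψh' t) = ψh' t := by
      rw [← h2.derivWithin hu, (hψh t ht).derivWithin hu]
    rw [← he]; exact hPmem _
  -- the energy function and its derivative
  set g : ℝ → ℝ := fun t => ⟪ψ t - ψh t, ψ t - ψh t⟫ - ⟪ψ t - P (ψ t), ψ t - P (ψ t)⟫
    with hgdef
  set g' : ℝ → ℝ := fun t => 2 * a (θ t) (θ t) - 2 * a (θ t) (ξ t) with hg'def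
  have hgd : ∀ t ∈ I, HasDerivWithinAt g (g' t) I t := by
    intro t ht
    have hd1 : HasDerivWithinAt (fun s => ψ s - ψh s) (ψ' t - ψh' t) I t :=
      (hψ t ht).sub (hψh t ht)
    have hdP : HasDerivWithinAt (fun s => P (ψ s)) (P (ψ' t)) I t :=
      P.hasFDerivAt.comp_hasDerivWithinAt t (hψ t ht)
    have hd2 : HasDerivWithinAt (fun s => ψ s - P (ψ s)) (ψ' t - P (ψ' t)) I t :=
      (hψ t ht).sub hdP
    have hD := ((hd1.inner ℝ hd1).sub (hd2.inner ℝ hd2))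
    have key : (⟪ψ t - ψh t, ψ' t - ψh' t⟫ + ⟪ψ' t - ψh' t, ψ t - ψh t⟫) -
        (⟪ψ t - P (ψ t), ψ' t - P (ψ' t)⟫ + ⟪ψ' t - P (ψ' t), ψ t - P (ψ t)⟫) = g' t := by
      have e1 : ⟪ψ t - ψh t, ψ' t - ψh' t⟫ = ⟪ψ' t - ψh' t, ψ t - ψh t⟫ := real_inner_comm _ _
      have e2 : ⟪ψ t - P (ψ t), ψ' t - P (ψ' t)⟫ = ⟪ψ' t - P (ψ' t), ψ t - P (ψ t)⟫ :=
        real_inner_comm _ _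
      have A3 : ⟪ψ' t - ψh' t, ψ t - ψh t⟫ =
          ⟪ψ' t - ψh' t, ψ t - P (ψ t)⟫ + ⟪ψ' t - ψh' t, P (ψ t) - ψh t⟫ := by
        rw [← inner_add_right]
        congr 1
        abel
      have A2 : ⟪ψ' t - ψh' t, P (ψ t) - ψh t⟫ = a (θ t) (P (ψ t) - ψh t) :=
        hii t ht _ (W.sub_mem (hPmem _) (hψhW t ht))
      have A4 : ⟪ψ' t - ψh' t, ψ t - P (ψ t)⟫ = ⟪ψ' t - P (ψ' t), ψ t - P (ψ t)⟫ := by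
        rw [inner_sub_left, inner_sub_left]
        have h5 : ⟪ψ t - P (ψ t), ψh' t⟫ = 0 := hPerp _ _ (hψh'W t ht)
        have h6 : ⟪ψ t - P (ψ t), P (ψ' t)⟫ = 0 := hPerp _ _ (hPmem _)
        rw [real_inner_comm (ψh' t), real_inner_comm (P (ψ' t))] at *
        rw [h5, h6]
      have A5 : a (θ t) (P (ψ t) - ψh t) = a (θ t) (θ t) - a (θ t) (ξ t) := by
        have : P (ψ t) - ψh t = θ t - ξ t := by simp only [hθdef, hξdef]; abel
        rw [this, map_sub]
      rw [e1, e2, A3, A2, A4, A5, hg'def]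
      ring
    rw [← key]
    exact hD
  -- continuity and integrability of the pieces
  have hgc : ContinuousOn g I := fun t ht => (hgd t ht).continuousWithinAt
  have hθθc : ContinuousOn (fun t => a (θ t) (θ t)) I := haCont hθc hθc
  have hθξc : ContinuousOn (fun t => a (θ t) (ξ t)) I := haCont hθc hξc
  have hξξc : ContinuousOn (fun t => a (ξ t) (ξ t)) I := haCont hξc hξc
  have hθθi : IntervalIntegrable (fun t => a (θ t) (θ t)) volume 0 T := hint hθθc
  have hθξi : IntervalIntegrable (fun t => a (θ t) (ξ t)) volume 0 T := hint hθξc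
  have hξξi : IntervalIntegrable (fun t => a (ξ t) (ξ t)) volume 0 T := hint hξξc
  have hg'c : ContinuousOn g' I := by
    have := (hθθc.const_smul (2:ℝ)).sub (hθξc.const_smul (2:ℝ))
    simpa [hg'def, smul_eq_mul, Pi.smul_def, Pi.sub_def] using this
  have hg'i : IntervalIntegrable g' volume 0 T := hint hg'c
  -- fundamental theorem of calculus
  have hFTC : ∫ t in (0:ℝ)..T, g' t = g T - g 0 := by
    apply intervalIntegral.integral_eq_sub_of_hasDeriv_right_of_le hT0 hgc _ hg'i
    intro x hx
    have hxI : x ∈ I := Set.Ioo_subset_Icc_self hx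
    exact ((hgd x hxI).hasDerivAt (Icc_mem_nhds hx.1 hx.2)).hasDerivWithinAt
  have hgT : g T = 0 := by
    simp [hgdef, hψT, hψhT]
  have hg0 : g 0 = ‖ψ 0 - ψh 0‖ ^ 2 - ‖ψ 0 - P (ψ 0)‖ ^ 2 := by
    simp [hgdef, real_inner_self_eq_norm_sq]
  -- split the integral of g'
  have hsplit : ∫ t in (0:ℝ)..T, g' t =
      2 * (∫ t in (0:ℝ)..T, a (θ t) (θ t)) - 2 * (∫ t in (0:ℝ)..T, a (θ t) (ξ t)) := by
    rw [hg'def]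
    rw [intervalIntegral.integral_sub ((hθθi.const_mul 2)) ((hθξi.const_mul 2)),
      intervalIntegral.integral_const_mul, intervalIntegral.integral_const_mul]
  -- Cauchy–Schwarz type bound on the cross term
  have hCS : ∫ t in (0:ℝ)..T, a (θ t) (ξ t) ≤
      (∫ t in (0:ℝ)..T, (a (θ t) (θ t) + a (ξ t) (ξ t)) / 2) := by
    apply intervalIntegral.integral_mono_on hT0 hθξi ((hθθi.add hξξi).div_const 2)
    intro x hx
    have h0 : 0 ≤ a (θ x - ξ x) (θ x - ξ x) := ha_pos _
    have hexp : a (θ x - ξ x) (θ x - ξ x) =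
        a (θ x) (θ x) - 2 * a (θ x) (ξ x) + a (ξ x) (ξ x) := by
      simp only [map_sub, LinearMap.sub_apply]
      rw [ha_symm (ξ x) (θ x)]
      ring
    rw [hexp] at h0
    linarith
  have hCS' : ∫ t in (0:ℝ)..T, a (θ t) (ξ t) ≤
      ((∫ t in (0:ℝ)..T, a (θ t) (θ t)) + ∫ t in (0:ℝ)..T, a (ξ t) (ξ t)) / 2 := by
    calc ∫ t in (0:ℝ)..T, a (θ t) (ξ t) ≤
        ∫ t in (0:ℝ)..T, (a (θ t) (θ t) + a (ξ t) (ξ t)) / 2 := hCS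
      _ = ((∫ t in (0:ℝ)..T, a (θ t) (θ t)) + ∫ t in (0:ℝ)..T, a (ξ t) (ξ t)) / 2 := by
          rw [intervalIntegral.integral_div, intervalIntegral.integral_add hθθi hξξi]
  -- put everything together
  have hmain : ‖ψ 0 - ψh 0‖ ^ 2 + 2 * (∫ t in (0:ℝ)..T, a (θ t) (θ t)) =
      ‖ψ 0 - P (ψ 0)‖ ^ 2 + 2 * (∫ t in (0:ℝ)..T, a (θ t) (ξ t)) := by
    have := hFTC
    rw [hgT, hg0, hsplit] at this
    linarith
  have hfinal : ‖ψ 0 - ψh 0‖ ^ 2 + (∫ t in (0:ℝ)..T, a (θ t) (θ t)) ≤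
      ‖ψ 0 - P (ψ 0)‖ ^ 2 + ∫ t in (0:ℝ)..T, a (ξ t) (ξ t) := by
    linarith
  simpa only [hθdef, hξdef, hPv] using hfinal
end

section
/- Let H be a real Hilbert space and a : H × H → ℝ a symmetric bilinear form with a(v,v) ≥ 0 for all v ∈ H. Let τ > 0, N ∈ ℕ, and let u⁰, u¹, …, u^N ∈ H and f¹, …, f^N ∈ H satisfy the backward Euler relations ⟨uⁿ − uⁿ⁻¹, v⟩ + τ a(uⁿ, v) = τ ⟨fⁿ, v⟩ for all v ∈ H and all n = 1, …, N. Then for every m with 1 ≤ m ≤ N: (1/2) Σ_{n=1}^m ‖uⁿ − uⁿ⁻¹‖² + (τ/2) a(u^m, u^m) + (τ/2) Σ_{n=1}^m a(uⁿ − uⁿ⁻¹, uⁿ − uⁿ⁻¹) ≤ (τ/2) a(u⁰, u⁰) + (τ²/2) Σ_{n=1}^m ‖fⁿ‖². -/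
open scoped RealInnerProductSpace

lemma backward_euler_step
    {H : Type*} [NormedAddCommGroup H] [InnerProductSpace ℝ H]
    (a : H →ₗ[ℝ] H →ₗ[ℝ] ℝ)
    (ha_symm : ∀ u v : H, a u v = a v u)
    (τ : ℝ) (hτ : 0 < τ) (N : ℕ)
    (u f : ℕ → H)
    (hscheme : ∀ n, 1 ≤ n → n ≤ N → ∀ v : H,
      ⟪u n - u (n - 1), v⟫ + τ * a (u n) v = τ * ⟪f n, v⟫)
    (n : ℕ) (h1 : 1 ≤ n) (h2 : n ≤ N) :
    (1 / 2) * ‖u n - u (n - 1)‖ ^ 2 + (τ / 2) * a (u n) (u n) +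
      (τ / 2) * a (u n - u (n - 1)) (u n - u (n - 1)) ≤
    (τ / 2) * a (u (n - 1)) (u (n - 1)) + (τ ^ 2 / 2) * ‖f n‖ ^ 2 := by
  set d := u n - u (n - 1) with hd
  have h := hscheme n h1 h2 d
  have hdd : ⟪d, d⟫ = ‖d‖ ^ 2 := real_inner_self_eq_norm_sq d
  have hexp : a (u n) d =
      (a (u n) (u n) - a (u (n - 1)) (u (n - 1)) + a d d) / 2 := by
    have hsymm := ha_symm (u (n - 1)) (u n)
    simp only [hd, map_sub, LinearMap.sub_apply] at *
    linarith
  have hf : τ * ⟪f n, d⟫ ≤ τ ^ 2 / 2 * ‖f n‖ ^ 2 + 1 / 2 * ‖d‖ ^ 2 := by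
    have h1 := real_inner_le_norm (f n) d
    have h2 : 0 ≤ (τ * ‖f n‖ - ‖d‖) ^ 2 := sq_nonneg _
    nlinarith [norm_nonneg (f n), norm_nonneg d]
  rw [hdd, hexp] at h
  linarith

/-- Stability of the backward Euler scheme.  `H` is a real Hilbert
space, `a` a symmetric positive-semidefinite bilinear form, `τ > 0`, and
`u⁰, …, u^N`, `f¹, …, f^N` satisfy `⟪uⁿ - uⁿ⁻¹, v⟫ + τ a(uⁿ, v) = τ ⟪fⁿ, v⟫` for all
`v ∈ H` and `1 ≤ n ≤ N`.  Then for every `1 ≤ m ≤ N`,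
`(1/2) Σₙ ‖uⁿ - uⁿ⁻¹‖² + (τ/2) a(uᵐ, uᵐ) + (τ/2) Σₙ a(uⁿ - uⁿ⁻¹, uⁿ - uⁿ⁻¹)
  ≤ (τ/2) a(u⁰, u⁰) + (τ²/2) Σₙ ‖fⁿ‖²`. -/
theorem backward_euler_stability
    {H : Type*} [NormedAddCommGroup H] [InnerProductSpace ℝ H]
    (a : H →ₗ[ℝ] H →ₗ[ℝ] ℝ)
    (ha_symm : ∀ u v : H, a u v = a v u)
    (ha_pos : ∀ v : H, 0 ≤ a v v)
    (τ : ℝ) (hτ : 0 < τ) (N : ℕ)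
    (u f : ℕ → H)
    (hscheme : ∀ n, 1 ≤ n → n ≤ N → ∀ v : H,
      ⟪u n - u (n - 1), v⟫ + τ * a (u n) v = τ * ⟪f n, v⟫) :
    ∀ m, 1 ≤ m → m ≤ N →
      (1 / 2) * ∑ n ∈ Finset.Icc 1 m, ‖u n - u (n - 1)‖ ^ 2 +
        (τ / 2) * a (u m) (u m) +
        (τ / 2) * ∑ n ∈ Finset.Icc 1 m, a (u n - u (n - 1)) (u n - u (n - 1)) ≤
      (τ / 2) * a (u 0) (u 0) + (τ ^ 2 / 2) * ∑ n ∈ Finset.Icc 1 m, ‖f n‖ ^ 2 := by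
  intro m hm
  induction m, hm using Nat.le_induction with
  | base =>
    intro hN
    have h := backward_euler_step a ha_symm τ hτ N u f hscheme 1 le_rfl hN
    simpa using h
  | succ m hm ih =>
    intro hN
    have hmN : m ≤ N := le_trans (Nat.le_succ m) hN
    have ihm := ih hmN
    have h := backward_euler_step a ha_symm τ hτ N u f hscheme (m + 1)
      (Nat.le_add_left 1 m) hN
    have e1 : ∑ n ∈ Finset.Icc 1 (m + 1), ‖u n - u (n - 1)‖ ^ 2 =
        ∑ n ∈ Finset.Icc 1 m, ‖u n - u (n - 1)‖ ^ 2 + ‖u (m+1) - u (m+1-1)‖ ^ 2 :=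
      Finset.sum_Icc_succ_top (by omega) _
    have e2 : ∑ n ∈ Finset.Icc 1 (m + 1), a (u n - u (n - 1)) (u n - u (n - 1)) =
        ∑ n ∈ Finset.Icc 1 m, a (u n - u (n - 1)) (u n - u (n - 1)) +
          a (u (m+1) - u (m+1-1)) (u (m+1) - u (m+1-1)) :=
      Finset.sum_Icc_succ_top (by omega) _
    have e3 : ∑ n ∈ Finset.Icc 1 (m + 1), ‖f n‖ ^ 2 =
        ∑ n ∈ Finset.Icc 1 m, ‖f n‖ ^ 2 + ‖f (m+1)‖ ^ 2 :=
      Finset.sum_Icc_succ_top (by omega) _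
    simp only [Nat.add_sub_cancel] at h e1 e2 e3
    rw [e1, e2, e3]
    linarith
end
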